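/- Fix n ≥ 1 and work in ℝⁿ with Lebesgue measure; |x| denotes the Euclidean norm. Let K : ℝⁿ → [0,∞) be a measurable kernel with K(−x) = K(x) for all x ∈ ℝⁿ and ∫_{ℝⁿ} min{1,|x|} K(x) dx < ∞. Then for every ν ∈ ℝⁿ∖{0}, the map ζ_ν : ℝⁿ×ℝⁿ → [−1,1] defined by ζ_ν(x,y) := sign(⟨y−x, ν⟩) is a calibration for the indicator function χ_{H_ν} of the halfspace H_ν. -/

import Mathlib

open MeasureTheory Set Filter Metric
open scoped ENNReal Topology

/-- `ζ : ℝⁿ×ℝⁿ → [−1,1]` is a calibration for `u : ℝⁿ → [0,1]` w.r.t. the kernel `K`. -/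
def IsCalibration {n : ℕ} (K : EuclideanSpace ℝ (Fin n) → ℝ)
    (ζ : EuclideanSpace ℝ (Fin n) × EuclideanSpace ℝ (Fin n) → ℝ)
    (u : EuclideanSpace ℝ (Fin n) → ℝ) : Prop :=
  Measurable ζ ∧ (∀ pq, ζ pq ∈ Icc (-1 : ℝ) 1) ∧
  Tendsto (fun ε : ℝ =>
      ∫ p, |∫ y in (ball p ε)ᶜ, K (p - y) * (ζ (y, p) - ζ (p, y))|)
    (𝓝[>] 0) (𝓝 0) ∧
  (∀ᵐ pq : EuclideanSpace ℝ (Fin n) × EuclideanSpace ℝ (Fin n)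
      ∂((volume : Measure (EuclideanSpace ℝ (Fin n))).prod volume),
    u pq.1 ≠ u pq.2 → ζ pq * (u pq.2 - u pq.1) = |u pq.2 - u pq.1|)

/-- The halfspace with inner ℝ normal `ν`. -/
def halfspace {n : ℕ} (ν : EuclideanSpace ℝ (Fin n)) : Set (EuclideanSpace ℝ (Fin n)) :=
  {x | 0 ≤ (inner ℝ x ν : ℝ)}

lemma measurable_realSign : Measurable Real.sign := by
  unfold Real.sign
  exact Measurable.ite (measurableSet_lt measurable_id measurable_const) measurable_const
    (Measurable.ite (measurableSet_lt measurable_const measurable_id) measurable_const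
      measurable_const)

/-- The sign map `ζ_ν(x,y) = sign⟨y−x,ν⟩` is a calibration for the halfspace `H_ν`. -/
theorem halfspace_calibration (n : ℕ) (hn : 1 ≤ n)
    (K : EuclideanSpace ℝ (Fin n) → ℝ) (hKmeas : Measurable K)
    (hK0 : ∀ x, 0 ≤ K x) (hKsymm : ∀ x, K (-x) = K x)
    (hKint : ∫⁻ x : EuclideanSpace ℝ (Fin n),
        ENNReal.ofReal (min 1 ‖x‖ * K x) < ⊤)
    (ν : EuclideanSpace ℝ (Fin n)) (hν : ν ≠ 0) :
    IsCalibration K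
      (fun pq => Real.sign (inner ℝ (pq.2 - pq.1) ν : ℝ))
      ((halfspace ν).indicator 1) := by
  refine ⟨?_, ?_, ?_, ?_⟩
  · -- measurability
    exact measurable_realSign.comp
      ((Continuous.inner (continuous_snd.sub continuous_fst) continuous_const).measurable)
  · -- bounds
    intro pq
    show Real.sign (inner ℝ (pq.2 - pq.1) ν : ℝ) ∈ Icc (-1 : ℝ) 1
    rcases Real.sign_apply_eq (inner ℝ (pq.2 - pq.1) ν : ℝ) with h | h | h <;>
      rw [h] <;> constructor <;> norm_num
  · -- main vanishing condition: the inner ℝ integral is identically zero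
    have key : ∀ (ε : ℝ) (p : EuclideanSpace ℝ (Fin n)),
        (∫ y in (ball p ε)ᶜ, K (p - y) *
          (Real.sign (inner ℝ (p - y) ν : ℝ) - Real.sign (inner ℝ (y - p) ν : ℝ))) = 0 := by
      intro ε p
      set g : EuclideanSpace ℝ (Fin n) → ℝ := fun z =>
        K z * (Real.sign (inner ℝ z ν : ℝ) - Real.sign (inner ℝ (-z) ν : ℝ)) with hg
      have hgodd : ∀ z, g (-z) = - g z := by
        intro z
        simp only [hg, neg_neg, hKsymm]
        ring
      -- rewrite the integral as an integral of an indicator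
      have h1 : (∫ y in (ball p ε)ᶜ, K (p - y) *
            (Real.sign (inner ℝ (p - y) ν : ℝ) - Real.sign (inner ℝ (y - p) ν : ℝ)))
          = ∫ y, ((ball p ε)ᶜ).indicator (fun y => g (p - y)) y := by
        rw [integral_indicator (measurableSet_ball.compl)]
        refine setIntegral_congr_fun measurableSet_ball.compl (fun y _ => ?_)
        simp only [hg]
        congr 2
        rw [neg_sub]
      rw [h1]
      have h2 : (∫ y, ((ball p ε)ᶜ).indicator (fun y => g (p - y)) y)
          = ∫ z, ((ball (0 : EuclideanSpace ℝ (Fin n)) ε)ᶜ).indicator g z := by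
        rw [← integral_sub_left_eq_self
          (fun y => ((ball p ε)ᶜ).indicator (fun y => g (p - y)) y) volume p]
        refine integral_congr_ae (Eventually.of_forall fun z => ?_)
        show (ball p ε)ᶜ.indicator (fun y => g (p - y)) (p - z)
          = (ball (0 : EuclideanSpace ℝ (Fin n)) ε)ᶜ.indicator g z
        by_cases hz : z ∈ (ball (0 : EuclideanSpace ℝ (Fin n)) ε)ᶜ
        · have hz' : p - z ∈ (ball p ε)ᶜ := by
            simp only [mem_compl_iff, mem_ball, dist_eq_norm] at hz ⊢
            simpa using hz
          rw [indicator_of_mem hz', indicator_of_mem hz]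
          simp
        · have hz' : p - z ∉ (ball p ε)ᶜ := by
            simp only [mem_compl_iff, mem_ball, dist_eq_norm, not_not] at hz ⊢
            simpa using hz
          rw [indicator_of_notMem hz', indicator_of_notMem hz]
      rw [h2]
      -- the indicator of `g` over a symmetric set is odd, so the integral vanishes
      set h : EuclideanSpace ℝ (Fin n) → ℝ :=
        ((ball (0 : EuclideanSpace ℝ (Fin n)) ε)ᶜ).indicator g with hh
      have hodd : ∀ z, h (-z) = - h z := by
        intro z
        by_cases hz : z ∈ (ball (0 : EuclideanSpace ℝ (Fin n)) ε)ᶜ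
        · have hz' : -z ∈ (ball (0 : EuclideanSpace ℝ (Fin n)) ε)ᶜ := by
            simp only [mem_compl_iff, mem_ball, dist_eq_norm] at hz ⊢
            simpa using hz
          rw [hh, indicator_of_mem hz', indicator_of_mem hz, hgodd]
        · have hz' : -z ∉ (ball (0 : EuclideanSpace ℝ (Fin n)) ε)ᶜ := by
            simp only [mem_compl_iff, mem_ball, dist_eq_norm, not_not] at hz ⊢
            simpa using hz
          rw [hh, indicator_of_notMem hz', indicator_of_notMem hz, neg_zero]
      have : (∫ z, h z) = - ∫ z, h z := by
        conv_lhs => rw [← integral_neg_eq_self h volume]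
        rw [← integral_neg]
        exact integral_congr_ae (Eventually.of_forall fun z => hodd z)
      linarith
    have heq : (fun ε : ℝ =>
        ∫ p : EuclideanSpace ℝ (Fin n), |∫ y in (ball p ε)ᶜ, K (p - y) *
          (Real.sign (inner ℝ ((y, p).2 - (y, p).1) ν : ℝ) -
           Real.sign (inner ℝ ((p, y).2 - (p, y).1) ν : ℝ))|) = fun _ => 0 := by
      funext ε
      have : ∀ p : EuclideanSpace ℝ (Fin n), |∫ y in (ball p ε)ᶜ, K (p - y) *
          (Real.sign (inner ℝ (p - y) ν : ℝ) - Real.sign (inner ℝ (y - p) ν : ℝ))| = 0 := by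
        intro p; rw [key ε p, abs_zero]
      simpa using integral_congr_ae (Eventually.of_forall this) |>.trans (by simp)
    simp only []
    rw [heq]
    exact tendsto_const_nhds
  · -- a.e. condition, in fact pointwise
    refine Eventually.of_forall fun pq h => ?_
    set u := (halfspace ν).indicator (1 : EuclideanSpace ℝ (Fin n) → ℝ) with hu
    have hval : ∀ x, x ∈ halfspace ν → u x = 1 := fun x hx => by
      rw [hu, indicator_of_mem hx]; rfl
    have hval' : ∀ x, x ∉ halfspace ν → u x = 0 := fun x hx => by
      rw [hu, indicator_of_notMem hx]
    have hinner : (inner ℝ (pq.2 - pq.1) ν : ℝ) = inner ℝ pq.2 ν - inner ℝ pq.1 ν :=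
      inner_sub_left _ _ _
    by_cases h1 : pq.1 ∈ halfspace ν <;> by_cases h2 : pq.2 ∈ halfspace ν
    · exact absurd ((hval _ h1).trans (hval _ h2).symm) h
    · -- u p = 1, u q = 0 : ⟨q,ν⟩ < 0 ≤ ⟨p,ν⟩
      have hq : (inner ℝ pq.2 ν : ℝ) < 0 := lt_of_not_ge (by simpa [halfspace] using h2)
      have hp : (0 : ℝ) ≤ inner ℝ pq.1 ν := h1
      have hneg : (inner ℝ (pq.2 - pq.1) ν : ℝ) < 0 := by rw [hinner]; linarith
      rw [hval _ h1, hval' _ h2]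
      simp only [Real.sign_of_neg hneg]
      norm_num
    · -- u p = 0, u q = 1
      have hp : (inner ℝ pq.1 ν : ℝ) < 0 := lt_of_not_ge (by simpa [halfspace] using h1)
      have hq : (0 : ℝ) ≤ inner ℝ pq.2 ν := h2
      have hpos : (0 : ℝ) < inner ℝ (pq.2 - pq.1) ν := by rw [hinner]; linarith
      rw [hval' _ h1, hval _ h2]
      simp only [Real.sign_of_pos hpos]
      norm_num
    · exact absurd ((hval' _ h1).trans (hval' _ h2).symm) h
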